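/- In the quantum spatial ageing algebra A, the identity EY^2 = (1/(q(1−q^2)))·Yφ + (q^3/(q^2−1))·YX holds, where φ = EY − qYE. -/

import Mathlib

/-- Generators of the quantum spatial ageing algebra. -/
inductive QGen : Type
  | E | K | Kinv | X | Y

open FreeAlgebra in
/-- Defining relations of the quantum spatial ageing algebra
`EK = q⁻²KE`, `XK = q⁻¹KX`, `YK = qKY`, `EX = qXE`, `EY = X + q⁻¹YE`, `qYX = XY`,
together with `K K⁻¹ = K⁻¹ K = 1`. -/
inductive QSARel (k : Type) [Field k] (q : k) :
    FreeAlgebra k QGen → FreeAlgebra k QGen → Prop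
  | KKinv : QSARel k q (ι k QGen.K * ι k QGen.Kinv) 1
  | KinvK : QSARel k q (ι k QGen.Kinv * ι k QGen.K) 1
  | EK : QSARel k q (ι k QGen.E * ι k QGen.K) ((q ^ 2)⁻¹ • (ι k QGen.K * ι k QGen.E))
  | XK : QSARel k q (ι k QGen.X * ι k QGen.K) (q⁻¹ • (ι k QGen.K * ι k QGen.X))
  | YK : QSARel k q (ι k QGen.Y * ι k QGen.K) (q • (ι k QGen.K * ι k QGen.Y))
  | EX : QSARel k q (ι k QGen.E * ι k QGen.X) (q • (ι k QGen.X * ι k QGen.E))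
  | EY : QSARel k q (ι k QGen.E * ι k QGen.Y)
      (ι k QGen.X + q⁻¹ • (ι k QGen.Y * ι k QGen.E))
  | YX : QSARel k q (q • (ι k QGen.Y * ι k QGen.X)) (ι k QGen.X * ι k QGen.Y)

/-- The quantum spatial ageing algebra `𝒜 = 𝕂_q[X,Y] ⋊ U_q^{≥0}(sl₂)`. -/
noncomputable abbrev QSA (k : Type) [Field k] (q : k) : Type := RingQuot (QSARel k q)

noncomputable def Egen (k : Type) [Field k] (q : k) : QSA k q :=
  RingQuot.mkAlgHom k (QSARel k q) (FreeAlgebra.ι k QGen.E)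
noncomputable def Kgen (k : Type) [Field k] (q : k) : QSA k q :=
  RingQuot.mkAlgHom k (QSARel k q) (FreeAlgebra.ι k QGen.K)
noncomputable def Kinvgen (k : Type) [Field k] (q : k) : QSA k q :=
  RingQuot.mkAlgHom k (QSARel k q) (FreeAlgebra.ι k QGen.Kinv)
noncomputable def Xgen (k : Type) [Field k] (q : k) : QSA k q :=
  RingQuot.mkAlgHom k (QSARel k q) (FreeAlgebra.ι k QGen.X)
noncomputable def Ygen (k : Type) [Field k] (q : k) : QSA k q :=
  RingQuot.mkAlgHom k (QSARel k q) (FreeAlgebra.ι k QGen.Y)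

/-- The normal element `φ = EY - qYE`. -/
noncomputable def phi (k : Type) [Field k] (q : k) : QSA k q :=
  Egen k q * Ygen k q - q • (Ygen k q * Egen k q)

/-!
Applying `EY = X + q⁻¹YE` writes both `EY²` and `Yφ` as combinations of `YX` and `Y²E`; as
`q² ≠ 1`, the coefficient `q⁻¹ - q` of `Y²E` in `Yφ` is nonzero, so `Y²E` can be eliminated.
-/

variable {k : Type} [Field k] {q : k}

theorem Egen_mul_Ygen :
    Egen k q * Ygen k q = Xgen k q + q⁻¹ • (Ygen k q * Egen k q) := by
  simpa only [Egen, Ygen, Xgen, map_mul, map_add, map_smul] using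
    RingQuot.mkAlgHom_rel k (QSARel.EY (q := q))

theorem Xgen_mul_Ygen : Xgen k q * Ygen k q = q • (Ygen k q * Xgen k q) := by
  simpa only [Ygen, Xgen, map_mul, map_smul] using
    (RingQuot.mkAlgHom_rel k (QSARel.YX (q := q))).symm

theorem Egen_mul_Ygen_sq :
    Egen k q * Ygen k q ^ 2 =
      (q + q⁻¹) • (Ygen k q * Xgen k q) + q⁻¹ ^ 2 • (Ygen k q * (Ygen k q * Egen k q)) := by
  rw [sq, ← mul_assoc, Egen_mul_Ygen, add_mul, Xgen_mul_Ygen, smul_mul_assoc, mul_assoc,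
    Egen_mul_Ygen, mul_add, mul_smul_comm]
  module

theorem Ygen_mul_phi :
    Ygen k q * phi k q =
      Ygen k q * Xgen k q + (q⁻¹ - q) • (Ygen k q * (Ygen k q * Egen k q)) := by
  rw [phi, Egen_mul_Ygen, mul_sub, mul_add, mul_smul_comm, mul_smul_comm]
  module

theorem stmt18_general (k : Type) [Field k] (q : k)
    (hq' : ∀ n : ℕ, n ≠ 0 → q ^ n ≠ 1) :
    Egen k q * Ygen k q ^ 2 =
      (q * (1 - q ^ 2))⁻¹ • (Ygen k q * phi k q) +
        (q ^ 3 / (q ^ 2 - 1)) • (Ygen k q * Xgen k q) := by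
  have hq2 : q ^ 2 - 1 ≠ 0 := sub_ne_zero.mpr (hq' 2 two_ne_zero)
  have hq2' : 1 - q ^ 2 ≠ 0 := sub_ne_zero.mpr (hq' 2 two_ne_zero).symm
  rw [Egen_mul_Ygen_sq, Ygen_mul_phi]
  rcases eq_or_ne q 0 with rfl | hq
  · simp -- every coefficient vanishes, as `0⁻¹ = 0`
  match_scalars
  · field_simp
    ring
  · field_simp

/-- `EY² = (1/(q(1−q²)))Yφ + (q³/(q²−1))YX`. -/
theorem stmt18 (k : Type) [Field k] (q : k) (hq : q ≠ 0)
    (hq' : ∀ n : ℕ, n ≠ 0 → q ^ n ≠ 1) :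
    Egen k q * Ygen k q ^ 2 =
      (q * (1 - q ^ 2))⁻¹ • (Ygen k q * phi k q) +
        (q ^ 3 / (q ^ 2 - 1)) • (Ygen k q * Xgen k q) :=
  stmt18_general k q hq'
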